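/- For every tree T_n on n ≥ 2 vertices and every integer m ≥ 2, R(T_n, K_m) = (n−1)(m−1) + 1. -/

import Mathlib

/-!
Lower bound: colour red `m - 1` disjoint cliques of size `n - 1` and everything else blue.
A red copy of the connected graph `T` would lie in one red clique, which is too small, and a
blue clique meets each red clique at most once.

Upper bound (Chvátal), by induction on `m`: if some vertex has more than `(n - 1)(m - 2)` blue
neighbours, the induction hypothesis inside its blue neighbourhood gives a red `T` or a blue
`K_{m-1}`, which the vertex extends to a blue `K_m`. Otherwise every red degree is at least
`n - 1`, and `T` embeds greedily: embed `T` minus a leaf, then send the leaf to a red neighbour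
of its parent's image that is not used yet.
-/

open SimpleGraph Finset

/-- `G` embeds into `H` (a copy of `G` appears in `H`). -/
def graphEmbeds {V W : Type*} (G : SimpleGraph V) (H : SimpleGraph W) : Prop :=
  ∃ f : V → W, Function.Injective f ∧ ∀ u v, G.Adj u v → H.Adj (f u) (f v)

/-- `N` is large enough for the Ramsey property: every red/blue coloring of `K_N`
(the red graph `R`, blue graph `Rᶜ`) contains a red `G` or a blue `H`. -/
def isRamsey {V W : Type*} (G : SimpleGraph V) (H : SimpleGraph W) (N : ℕ) : Prop :=
  ∀ R : SimpleGraph (Fin N), graphEmbeds G R ∨ graphEmbeds H Rᶜ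

/-- The Ramsey number `R(G,H)`. -/
noncomputable def ramsey {V W : Type*} (G : SimpleGraph V) (H : SimpleGraph W) : ℕ :=
  sInf {N | isRamsey G H N}

/-- `t` disjoint copies of the complete graph `K_m`. -/
def kCliques (t m : ℕ) : SimpleGraph (Fin t × Fin m) where
  Adj x y := x.1 = y.1 ∧ x.2 ≠ y.2
  symm := ⟨fun x y h => ⟨h.1.symm, h.2.symm⟩⟩
  loopless := ⟨fun x h => h.2 rfl⟩

/-- The chromatic number as a natural number. -/
noncomputable def chromNum {V : Type*} (G : SimpleGraph V) : ℕ := sInf {n | G.Colorable n}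

/-- The chromatic surplus: the minimum size of a color class over all proper
colorings with `chromNum G` colors. -/
noncomputable def surplus {V : Type*} [Fintype V] (G : SimpleGraph V) : ℕ :=
  sInf {k | ∃ C : G.Coloring (Fin (chromNum G)), ∃ i : Fin (chromNum G),
    (Finset.univ.filter (fun v => C v = i)).card = k}

/-- `a` is a leaf of `G`: it has a unique neighbor. -/
def IsLeaf {V : Type*} (G : SimpleGraph V) (a : V) : Prop := ∃! w, G.Adj a w

/-- Stretching: delete a leaf `b` and attach a new vertex (reusing the label `b`)
to the leaf `a`. -/
def isStretch {V : Type*} (T T' : SimpleGraph V) : Prop :=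
  ∃ a b : V, a ≠ b ∧ IsLeaf T a ∧ IsLeaf T b ∧
    ∀ x y, T'.Adj x y ↔
      ((T.Adj x y ∧ x ≠ b ∧ y ≠ b) ∨ (x = b ∧ y = a) ∨ (x = a ∧ y = b))

/-- Expanding at a vertex `u` of degree `d` (`2 ≤ d ≤ n-2`) all of whose neighbors
are leaves except `z0`: delete a leaf `b` outside `N[u]` and attach a new vertex
(reusing the label `b`) to `u`. -/
def isExpand {V : Type*} [Fintype V] (T T' : SimpleGraph V) : Prop :=
  ∃ u b z0 : V, T.Adj u z0 ∧ ¬ IsLeaf T z0 ∧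
    (∀ z, T.Adj u z → z ≠ z0 → IsLeaf T z) ∧
    2 ≤ (T.neighborSet u).ncard ∧ (T.neighborSet u).ncard ≤ Fintype.card V - 2 ∧
    IsLeaf T b ∧ b ≠ u ∧ ¬ T.Adj u b ∧
    ∀ x y, T'.Adj x y ↔
      ((T.Adj x y ∧ x ≠ b ∧ y ≠ b) ∨ (x = b ∧ y = u) ∨ (x = u ∧ y = b))

/-- Disjoint union of `K_m` and `K_l`. -/
def kUnion (m l : ℕ) : SimpleGraph (Fin m ⊕ Fin l) where
  Adj x y := x ≠ y ∧ ((x.isLeft ∧ y.isLeft) ∨ (x.isRight ∧ y.isRight))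
  symm := ⟨fun x y h => ⟨h.1.symm, h.2.imp (fun p => ⟨p.2, p.1⟩) (fun p => ⟨p.2, p.1⟩)⟩⟩
  loopless := ⟨fun x h => h.1 rfl⟩

/-- Disjoint union of `k` graphs, each on `Fin n`. -/
def disjUnion {k n : ℕ} (Fs : Fin k → SimpleGraph (Fin n)) :
    SimpleGraph (Fin k × Fin n) where
  Adj x y := x.1 = y.1 ∧ (Fs x.1).Adj x.2 y.2
  symm := by
    refine ⟨?_⟩
    rintro ⟨i, a⟩ ⟨j, b⟩ ⟨h1, h2⟩
    dsimp at h1 h2 ⊢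
    subst h1
    exact ⟨rfl, h2.symm⟩
  loopless := by
    refine ⟨?_⟩
    rintro ⟨i, a⟩ ⟨h1, h2⟩
    exact (Fs i).irrefl (v := a) h2

/-- Disjoint union of graphs `Fs i` on `Fin (n i)`. -/
def sigmaUnion {r : ℕ} {n : Fin r → ℕ} (Fs : ∀ i, SimpleGraph (Fin (n i))) :
    SimpleGraph (Σ i, Fin (n i)) where
  Adj x y := ∃ (i : Fin r) (a b : Fin (n i)), x = ⟨i, a⟩ ∧ y = ⟨i, b⟩ ∧ (Fs i).Adj a b
  symm := by
    refine ⟨?_⟩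
    rintro x y ⟨i, a, b, hx, hy, h⟩
    exact ⟨i, b, a, hy, hx, h.symm⟩
  loopless := by
    refine ⟨?_⟩
    rintro x ⟨i, a, b, hx, hy, h⟩
    rw [hx] at hy
    obtain ⟨-, hab⟩ := (Sigma.mk.inj_iff).mp hy
    exact (Fs i).irrefl (v := a) (by cases eq_of_heq hab; exact h)

namespace SimpleGraph

variable {V W : Type*}

lemma graphEmbeds_iff_isContained {G : SimpleGraph V} {H : SimpleGraph W} :
    graphEmbeds G H ↔ G ⊑ H :=
  ⟨fun ⟨f, hf, hadj⟩ => ⟨⟨⟨f, hadj _ _⟩, hf⟩⟩,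
    fun ⟨f⟩ => ⟨f, f.injective, fun _ _ h => f.toHom.map_adj h⟩⟩

lemma isContained_of_copy_induce_compl_singleton {G : SimpleGraph V} {H : SimpleGraph W}
    {x y : V} (hy : y ≠ x) (hx : ∀ z, G.Adj x z → z = y) (f : Copy (G.induce {x}ᶜ) H)
    {w : W} (hw : w ∉ Set.range f) (hadj : H.Adj (f ⟨y, hy⟩) w) : G ⊑ H := by
  classical
  let g : V → W := fun v => if h : v = x then w else f ⟨v, h⟩
  have hg_of_ne {v : V} (h : v ≠ x) : g v = f ⟨v, h⟩ := dif_neg h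
  have hg_x : g x = w := dif_pos rfl
  have g_adj_x {v : V} (hv : v ≠ x) (h : G.Adj x v) : H.Adj (g x) (g v) := by
    obtain rfl := hx v h
    rw [hg_x, hg_of_ne hv]
    exact hadj.symm
  have g_adj {u v : V} (huv : G.Adj u v) : H.Adj (g u) (g v) := by
    by_cases hu : u = x <;> by_cases hv : v = x
    · exact absurd (hu.trans hv.symm) huv.ne
    · subst hu; exact g_adj_x hv huv
    · subst hv; exact (g_adj_x hu huv.symm).symm
    · rw [hg_of_ne hu, hg_of_ne hv]
      exact f.toHom.map_adj huv
  have g_inj : Function.Injective g := fun u v huv => by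
    by_cases hu : u = x <;> by_cases hv : v = x
    · exact hu.trans hv.symm
    · rw [hu, hg_x, hg_of_ne hv] at huv
      exact absurd ⟨_, huv.symm⟩ hw
    · rw [hv, hg_x, hg_of_ne hu] at huv
      exact absurd ⟨_, huv⟩ hw
    · rw [hg_of_ne hu, hg_of_ne hv] at huv
      exact congrArg Subtype.val (f.injective huv)
  exact ⟨⟨⟨g, g_adj⟩, g_inj⟩⟩

lemma IsTree.induce_compl_singleton_of_degree_eq_one [Fintype V] {T : SimpleGraph V}
    [DecidableRel T.Adj] (hT : T.IsTree) {x : V} (hx : T.degree x = 1) :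
    (T.induce {x}ᶜ).IsTree :=
  ⟨hT.connected.induce_compl_singleton_of_degree_eq_one hx, hT.isAcyclic.induce _⟩

theorem IsTree.isContained_of_le_degree [Finite V] [Fintype W] [Nonempty W]
    {T : SimpleGraph V} (hT : T.IsTree) {H : SimpleGraph W} [DecidableRel H.Adj]
    (hH : ∀ w, Nat.card V - 1 ≤ H.degree w) : T ⊑ H := by
  induction V using Finite.induction_subsingleton_or_nontrivial with
  | hbase V =>
    have : Fintype V := Fintype.ofFinite V
    refine IsContained.mono_left (A' := ⊥) (fun u v h => (h.ne (Subsingleton.elim u v)).elim) ?_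
    exact bot_isContained_iff_card_le.mpr
      (Fintype.card_le_one_iff_subsingleton.mpr ‹_› |>.trans Fintype.card_pos)
  | hstep V ih =>
    classical
    have : Fintype V := Fintype.ofFinite V
    obtain ⟨x, hx⟩ := hT.exists_vert_degree_one_of_nontrivial
    obtain ⟨y, hxy, hy_unique⟩ := degree_eq_one_iff_existsUnique_adj.mp hx
    have hcard : Nat.card ↥({x}ᶜ : Set V) = Nat.card V - 1 := by
      rw [Nat.card_coe_set_eq, ← Set.ncard_add_ncard_compl {x}, Set.ncard_singleton]
      omega
    obtain ⟨f⟩ := ih _ (by rw [hcard]; exact Nat.sub_lt Nat.card_pos one_pos)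
      (hT.induce_compl_singleton_of_degree_eq_one hx)
      (fun w => by rw [hcard]; exact (Nat.sub_le _ 1).trans (hH w))
    set fy := f ⟨y, hxy.ne'⟩
    have hlt : #((Finset.univ.image f).erase fy) < #(H.neighborFinset fy) := by
      rw [Finset.card_erase_of_mem (Finset.mem_image_of_mem f (Finset.mem_univ _)),
        Finset.card_image_of_injective (f := f) _ f.injective, Finset.card_univ,
        ← Nat.card_eq_fintype_card, hcard, card_neighborFinset_eq_degree]
      have := hH fy
      have : 2 ≤ Nat.card V := Finite.one_lt_card
      omega
    obtain ⟨w, hw_adj, hw_unused⟩ := Finset.exists_mem_notMem_of_card_lt_card hlt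
    rw [mem_neighborFinset] at hw_adj
    refine isContained_of_copy_induce_compl_singleton hxy.ne' hy_unique f
      (fun ⟨v, hv⟩ => hw_unused ?_) hw_adj
    exact Finset.mem_erase.mpr ⟨hw_adj.ne', hv ▸ Finset.mem_image_of_mem f (Finset.mem_univ v)⟩

lemma compl_induce (G : SimpleGraph V) (s : Set V) : (G.induce s)ᶜ = Gᶜ.induce s := by
  ext a b
  simp [Subtype.ext_iff]

theorem IsTree.isContained_or_not_cliqueFree_compl [Finite V] {T : SimpleGraph V}
    (hT : T.IsTree) (m : ℕ) {W : Type*} [Fintype W] (H : SimpleGraph W)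
    (hW : (Nat.card V - 1) * m < Fintype.card W) : T ⊑ H ∨ ¬ Hᶜ.CliqueFree (m + 1) := by
  classical
  induction m generalizing W with
  | zero =>
    right
    rw [cliqueFree_one, not_isEmpty_iff, ← Fintype.card_pos_iff]
    simpa using hW
  | succ m ih =>
    by_cases hdeg : ∃ v, (Nat.card V - 1) * m < Hᶜ.degree v
    · obtain ⟨v, hv⟩ := hdeg
      rw [← card_neighborSet_eq_degree] at hv
      refine (ih (H.induce (Hᶜ.neighborSet v)) hv).imp
        (fun hT' => hT'.trans (Copy.induce H _).isContained) (fun hclique hfree => hclique ?_)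
      rw [compl_induce, cliqueFree_induce_iff]
      simpa using ((cliqueFreeOn_univ _).mpr hfree).of_succ _ (Set.mem_univ v)
    · simp only [not_exists, not_lt] at hdeg
      have : Nonempty W := Fintype.card_pos_iff.mp (by omega)
      refine .inl (hT.isContained_of_le_degree fun w => ?_)
      have := hdeg w
      rw [degree_compl] at this
      have := H.degree_lt_card_verts w
      rw [Nat.mul_succ] at hW
      omega

theorem IsTree.isRamsey_top [Finite V] {T : SimpleGraph V} (hT : T.IsTree) (m : ℕ) :
    isRamsey T (⊤ : SimpleGraph (Fin (m + 1))) ((Nat.card V - 1) * m + 1) := fun R =>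
  (hT.isContained_or_not_cliqueFree_compl m R (by simp)).imp graphEmbeds_iff_isContained.mpr
    fun h => graphEmbeds_iff_isContained.mpr ((not_cliqueFree_iff_top_isContained _).mp h)

lemma kCliques_fst_eq_of_reachable {t q : ℕ} {a b : Fin t × Fin q}
    (h : (kCliques t q).Reachable a b) : a.1 = b.1 := by
  obtain ⟨p⟩ := h
  induction p with
  | nil => rfl
  | cons hadj _ ih => exact hadj.1.trans ih

lemma Connected.not_isContained_kCliques [Finite V] {T : SimpleGraph V} (hT : T.Connected)
    {t q : ℕ} (hq : q < Nat.card V) : ¬ T ⊑ kCliques t q := by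
  rintro ⟨f⟩
  obtain ⟨v₀⟩ := hT.nonempty
  have hfst (v : V) : (f v).1 = (f v₀).1 :=
    kCliques_fst_eq_of_reachable ((hT.preconnected v v₀).map f.toHom)
  have hinj : Function.Injective fun v => (f v).2 := fun u v h =>
    f.injective (Prod.ext ((hfst u).trans (hfst v).symm) h)
  have := Nat.card_le_card_of_injective _ hinj
  rw [Nat.card_fin] at this
  omega

lemma top_not_isContained_compl_kCliques {t q m : ℕ} (h : t < m) :
    ¬ (⊤ : SimpleGraph (Fin m)) ⊑ (kCliques t q)ᶜ := by
  rintro ⟨f⟩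
  have hinj : Function.Injective fun i => (f i).1 := fun i j hij => by
    by_contra hne
    have hadj := f.toHom.map_adj ((top_adj _ _).mpr hne)
    rw [compl_adj] at hadj
    exact hadj.2 ⟨hij, fun h₂ => hadj.1 (Prod.ext hij h₂)⟩
  have := Fintype.card_le_of_injective _ hinj
  simp only [Fintype.card_fin] at this
  omega

theorem Connected.not_isRamsey_top_of_le [Finite V] {T : SimpleGraph V} (hT : T.Connected)
    {m N : ℕ} (hm : 1 ≤ m) (hN : N ≤ (Nat.card V - 1) * (m - 1)) :
    ¬ isRamsey T (⊤ : SimpleGraph (Fin m)) N := by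
  intro hR
  have : Nonempty V := hT.nonempty
  let e : Fin N ↪ Fin (m - 1) × Fin (Nat.card V - 1) :=
    (Fin.castLEEmb (by rwa [mul_comm])).trans finProdFinEquiv.symm.toEmbedding
  obtain h | h := hR ((kCliques _ _).comap e)
  · exact hT.not_isContained_kCliques (Nat.sub_lt Nat.card_pos one_pos) <|
      (graphEmbeds_iff_isContained.mp h).trans (Embedding.comap e _).isContained
  · exact top_not_isContained_compl_kCliques (Nat.sub_lt hm one_pos) <|
      (graphEmbeds_iff_isContained.mp h).trans
        (compl_isIndContained_compl.mpr (Embedding.comap e _).isIndContained).isContained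

end SimpleGraph

theorem stmt_1_general (n m : ℕ) (hm : 2 ≤ m)
    (T : SimpleGraph (Fin n)) (hT : T.IsTree) :
    ramsey T (⊤ : SimpleGraph (Fin m)) = (n - 1) * (m - 1) + 1 := by
  obtain ⟨k, rfl⟩ : ∃ k, m = k + 1 := ⟨m - 1, by omega⟩
  refine IsLeast.csInf_eq ⟨by simpa using hT.isRamsey_top k, fun N hN => ?_⟩
  by_contra! hlt
  exact hT.connected.not_isRamsey_top_of_le (by omega) (by simpa using Nat.le_of_lt_succ hlt) hN

/-- Chvátal: every tree on `n ≥ 2` vertices is `K_m`-good for `m ≥ 2`. -/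
theorem stmt_1 (n m : ℕ) (hn : 2 ≤ n) (hm : 2 ≤ m)
    (T : SimpleGraph (Fin n)) (hT : T.IsTree) :
    ramsey T (⊤ : SimpleGraph (Fin m)) = (n - 1) * (m - 1) + 1 :=
  stmt_1_general n m hm T hT
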